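/- arXiv:2103.08417 — 2 statements merged into one kernel-verified Lean document; each statement's English description precedes it below -/
import Mathlib

section
/- Let H : ℝ^{N×F} → ℝ^{N×G} be a graph filter Y = ∑_{k=0}^K S^k X H_k over a support matrix S ∈ ℝ^{N×N} with filter taps H_k ∈ ℝ^{F×G}. Writing H_{fg}(S) = ∑_{k=0}^K [H_k]_{fg} S^k, if C ≥ 0 satisfies ∑_{g=1}^G ‖H_{fg}(S)‖₂ ≤ C for every f ∈ {1,…,F}, then for every X ∈ ℝ^{N×F}, ‖H(X)‖ ≤ C·‖X‖, where ‖·‖ is the L_{2,1} graph-signal norm (sum of Euclidean column norms). -/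
/-- The `L_{2,1}` graph-signal norm: sum of Euclidean norms of the columns. -/
noncomputable def l21 {N F : ℕ} (X : Matrix (Fin N) (Fin F) ℝ) : ℝ :=
  ∑ f : Fin F, Real.sqrt (∑ i : Fin N, (X i f) ^ 2)

/-- The spectral norm (operator norm induced by the Euclidean norm). -/
noncomputable def specNorm {N M : ℕ} (A : Matrix (Fin N) (Fin M) ℝ) : ℝ :=
  ‖LinearMap.toContinuousLinearMap (Matrix.toEuclideanLin A)‖

/-!
Column `g` of the filter output is `∑_f H_{fg}(S) x^f`. Bounding its Euclidean norm by the
triangle inequality and the spectral norms, then summing over `g` and exchanging the sums,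
gives `∑_f (∑_g ‖H_{fg}(S)‖₂) ‖x^f‖ ≤ C ∑_f ‖x^f‖`.
-/

open Matrix Finset

lemma sqrt_sum_sq_eq_norm_toLp {n : Type*} [Fintype n] (v : n → ℝ) :
    Real.sqrt (∑ i, v i ^ 2) = ‖WithLp.toLp 2 v‖ := by
  simp [EuclideanSpace.norm_eq]

lemma l21_eq_sum_norm_col {N F : ℕ} (X : Matrix (Fin N) (Fin F) ℝ) :
    l21 X = ∑ f, ‖WithLp.toLp 2 (Xᵀ f)‖ :=
  sum_congr rfl fun _ _ => sqrt_sum_sq_eq_norm_toLp _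

lemma norm_toLp_mulVec_le {N M : ℕ} (A : Matrix (Fin N) (Fin M) ℝ) (v : Fin M → ℝ) :
    ‖WithLp.toLp 2 (A *ᵥ v)‖ ≤ specNorm A * ‖WithLp.toLp 2 v‖ := by
  simpa [specNorm, toLpLin_toLp] using
    (LinearMap.toContinuousLinearMap (toEuclideanLin A)).le_opNorm (WithLp.toLp 2 v)

lemma transpose_sum_pow_mul_mul_apply {R n m p : Type*} [CommSemiring R] [Fintype n]
    [Fintype m] [DecidableEq n] (S : Matrix n n R) (X : Matrix n m R) (H : ℕ → Matrix m p R)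
    (s : Finset ℕ) (g : p) :
    (∑ k ∈ s, S ^ k * X * H k)ᵀ g = ∑ f, (∑ k ∈ s, H k f g • S ^ k) *ᵥ Xᵀ f := by
  ext i
  simp only [transpose_apply, Finset.sum_apply, Matrix.sum_apply, mul_apply, mulVec,
    dotProduct, Matrix.smul_apply, smul_eq_mul, sum_mul]
  rw [sum_comm]
  refine sum_congr rfl fun f _ => ?_
  rw [sum_comm]
  exact sum_congr rfl fun j _ => sum_congr rfl fun k _ => by ring

lemma l21_le_of_transpose_eq_sum_mulVec {N M F G : ℕ} (Y : Matrix (Fin N) (Fin G) ℝ)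
    (X : Matrix (Fin M) (Fin F) ℝ) (A : Fin F → Fin G → Matrix (Fin N) (Fin M) ℝ) {C : ℝ}
    (hbound : ∀ f, ∑ g, specNorm (A f g) ≤ C) (hcol : ∀ g, Yᵀ g = ∑ f, A f g *ᵥ Xᵀ f) :
    l21 Y ≤ C * l21 X := by
  have hcol_le (g : Fin G) :
      ‖WithLp.toLp 2 (Yᵀ g)‖ ≤ ∑ f, specNorm (A f g) * ‖WithLp.toLp 2 (Xᵀ f)‖ := by
    rw [hcol g, WithLp.toLp_sum]
    exact (norm_sum_le _ _).trans (sum_le_sum fun f _ => norm_toLp_mulVec_le _ _)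
  calc l21 Y ≤ ∑ g, ∑ f, specNorm (A f g) * ‖WithLp.toLp 2 (Xᵀ f)‖ := by
        rw [l21_eq_sum_norm_col]
        exact sum_le_sum fun g _ => hcol_le g
    _ = ∑ f, (∑ g, specNorm (A f g)) * ‖WithLp.toLp 2 (Xᵀ f)‖ := by
        rw [sum_comm]
        simp only [sum_mul]
    _ ≤ ∑ f, C * ‖WithLp.toLp 2 (Xᵀ f)‖ :=
        sum_le_sum fun f _ => mul_le_mul_of_nonneg_right (hbound f) (norm_nonneg _)
    _ = C * l21 X := by rw [← Finset.mul_sum, l21_eq_sum_norm_col]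

theorem stmt10_general {N F G K : ℕ} (S : Matrix (Fin N) (Fin N) ℝ)
    (H : ℕ → Matrix (Fin F) (Fin G) ℝ) (C : ℝ)
    (hbound : ∀ f : Fin F,
      ∑ g : Fin G, specNorm (∑ k ∈ Finset.range (K + 1), H k f g • S ^ k) ≤ C) :
    ∀ X : Matrix (Fin N) (Fin F) ℝ,
      l21 (∑ k ∈ Finset.range (K + 1), S ^ k * X * H k) ≤ C * l21 X := fun X =>
  l21_le_of_transpose_eq_sum_mulVec _ X _ hbound (transpose_sum_pow_mul_mul_apply S X H _)

/-- Lemma 1 (Bound on graph filter output): for the filter `Y = ∑_k S^k X H_k`, if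
`∑_g ‖H_{fg}(S)‖₂ ≤ C` for every `f`, where `H_{fg}(S) = ∑_k [H_k]_{fg} S^k`, then
`‖H(X)‖ ≤ C ‖X‖` in the `L_{2,1}` norm. -/
theorem stmt10 {N F G K : ℕ} (S : Matrix (Fin N) (Fin N) ℝ)
    (H : ℕ → Matrix (Fin F) (Fin G) ℝ) (C : ℝ) (hC : 0 ≤ C)
    (hbound : ∀ f : Fin F,
      ∑ g : Fin G, specNorm (∑ k ∈ Finset.range (K + 1), H k f g • S ^ k) ≤ C) :
    ∀ X : Matrix (Fin N) (Fin F) ℝ,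
      l21 (∑ k ∈ Finset.range (K + 1), S ^ k * X * H k) ≤ C * l21 X :=
  stmt10_general S H C hbound
end

section
/- Let A, Â ∈ ℝ^{N×N}, Ā, Ā̂ ∈ ℝ^{F×F}, and X, X̂ ∈ ℝ^{N×F}. Then in the L_{2,1} norm, ‖A X Ā − Â X̂ Ā̂‖ ≤ (‖A‖₂·‖Ā − Ā̂‖_∞ + ‖A − Â‖₂·‖Ā̂‖_∞)·‖X‖ + ‖Â‖₂·‖Ā̂‖_∞·‖X − X̂‖. -/
/-- The max-absolute-row-sum operator norm. -/
noncomputable def rowSumNorm {F G : ℕ} (A : Matrix (Fin F) (Fin G) ℝ) : ℝ :=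
  ⨆ f : Fin F, ∑ g : Fin G, |A f g|

/-!
Column by column, `A X` applies the operator `A` to each column, so its `L_{2,1}` norm is at
most `‖A‖₂ ‖X‖`; and the `g`-th column of `X B` is the combination `∑_f B_{fg} x^f`, so by the
triangle inequality and swapping the sums its `L_{2,1}` norm is at most `‖B‖_∞ ‖X‖`. The theorem
follows by writing `A X Ā − Â X̂ Ā̂ = A X (Ā − Ā̂) + (A − Â) X Ā̂ + Â (X − X̂) Ā̂` and bounding each
term this way.
-/

noncomputable def euclideanCol {N F : ℕ} (X : Matrix (Fin N) (Fin F) ℝ) (f : Fin F) :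
    EuclideanSpace ℝ (Fin N) :=
  WithLp.toLp 2 fun i => X i f

section EuclideanCol

variable {N M F G : ℕ}

lemma norm_euclideanCol (X : Matrix (Fin N) (Fin F) ℝ) (f : Fin F) :
    ‖euclideanCol X f‖ = Real.sqrt (∑ i : Fin N, (X i f) ^ 2) := by
  simp [EuclideanSpace.norm_eq, euclideanCol]

lemma l21_eq_sum_norm_euclideanCol (X : Matrix (Fin N) (Fin F) ℝ) :
    l21 X = ∑ f : Fin F, ‖euclideanCol X f‖ := by
  simp only [l21, norm_euclideanCol]

lemma euclideanCol_add (X Y : Matrix (Fin N) (Fin F) ℝ) (f : Fin F) :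
    euclideanCol (X + Y) f = euclideanCol X f + euclideanCol Y f := by
  ext i
  simp [euclideanCol]

lemma euclideanCol_mul_left (A : Matrix (Fin N) (Fin M) ℝ) (X : Matrix (Fin M) (Fin F) ℝ)
    (f : Fin F) :
    euclideanCol (A * X) f = Matrix.toEuclideanLin A (euclideanCol X f) := by
  ext i
  simp [euclideanCol, Matrix.mul_apply, Matrix.mulVec, dotProduct]

lemma euclideanCol_mul_right (X : Matrix (Fin N) (Fin F) ℝ) (B : Matrix (Fin F) (Fin G) ℝ)
    (g : Fin G) :
    euclideanCol (X * B) g = ∑ f : Fin F, B f g • euclideanCol X f := by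
  ext i
  simp [euclideanCol, Matrix.mul_apply, mul_comm]

end EuclideanCol

section Bounds

variable {N M F G : ℕ}

lemma rowSumNorm_nonneg (B : Matrix (Fin F) (Fin G) ℝ) : 0 ≤ rowSumNorm B :=
  Real.iSup_nonneg fun _ => Finset.sum_nonneg fun _ _ => abs_nonneg _

lemma sum_abs_le_rowSumNorm (B : Matrix (Fin F) (Fin G) ℝ) (f : Fin F) :
    ∑ g : Fin G, |B f g| ≤ rowSumNorm B :=
  le_ciSup (f := fun f => ∑ g : Fin G, |B f g|) (Set.finite_range _).bddAbove f

lemma l21_add_le (X Y : Matrix (Fin N) (Fin F) ℝ) : l21 (X + Y) ≤ l21 X + l21 Y := by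
  simp only [l21_eq_sum_norm_euclideanCol, euclideanCol_add, ← Finset.sum_add_distrib]
  exact Finset.sum_le_sum fun f _ => norm_add_le _ _

lemma l21_mul_left_le (A : Matrix (Fin N) (Fin M) ℝ) (X : Matrix (Fin M) (Fin F) ℝ) :
    l21 (A * X) ≤ specNorm A * l21 X := by
  simp only [l21_eq_sum_norm_euclideanCol, euclideanCol_mul_left, Finset.mul_sum]
  exact Finset.sum_le_sum fun f _ =>
    (LinearMap.toContinuousLinearMap (Matrix.toEuclideanLin A)).le_opNorm (euclideanCol X f)

lemma l21_mul_right_le (X : Matrix (Fin N) (Fin F) ℝ) (B : Matrix (Fin F) (Fin G) ℝ) :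
    l21 (X * B) ≤ rowSumNorm B * l21 X := by
  simp only [l21_eq_sum_norm_euclideanCol]
  calc ∑ g : Fin G, ‖euclideanCol (X * B) g‖
      ≤ ∑ g : Fin G, ∑ f : Fin F, |B f g| * ‖euclideanCol X f‖ := by
        refine Finset.sum_le_sum fun g _ => ?_
        rw [euclideanCol_mul_right]
        refine (norm_sum_le _ _).trans_eq ?_
        simp only [norm_smul, Real.norm_eq_abs]
    _ = ∑ f : Fin F, (∑ g : Fin G, |B f g|) * ‖euclideanCol X f‖ := by
        rw [Finset.sum_comm]
        simp only [Finset.sum_mul]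
    _ ≤ ∑ f : Fin F, rowSumNorm B * ‖euclideanCol X f‖ :=
        Finset.sum_le_sum fun f _ =>
          mul_le_mul_of_nonneg_right (sum_abs_le_rowSumNorm B f) (norm_nonneg _)
    _ = rowSumNorm B * ∑ f : Fin F, ‖euclideanCol X f‖ := (Finset.mul_sum ..).symm

lemma l21_mul_mul_le (A : Matrix (Fin N) (Fin M) ℝ) (X : Matrix (Fin M) (Fin F) ℝ)
    (B : Matrix (Fin F) (Fin G) ℝ) :
    l21 (A * X * B) ≤ specNorm A * rowSumNorm B * l21 X :=
  calc l21 (A * X * B) ≤ rowSumNorm B * l21 (A * X) := l21_mul_right_le _ _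
    _ ≤ rowSumNorm B * (specNorm A * l21 X) :=
        mul_le_mul_of_nonneg_left (l21_mul_left_le _ _) (rowSumNorm_nonneg _)
    _ = specNorm A * rowSumNorm B * l21 X := by ring

end Bounds

/-- Three-term splitting of the trajectory-deviation error:
`‖A X Ā − Â X̂ Ā̂‖ ≤ (‖A‖₂‖Ā−Ā̂‖_∞ + ‖A−Â‖₂‖Ā̂‖_∞)‖X‖ + ‖Â‖₂‖Ā̂‖_∞‖X−X̂‖`. -/
theorem stmt15 {N F : ℕ} (A Ah : Matrix (Fin N) (Fin N) ℝ)
    (Ab Abh : Matrix (Fin F) (Fin F) ℝ) (X Xh : Matrix (Fin N) (Fin F) ℝ) :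
    l21 (A * X * Ab - Ah * Xh * Abh)
      ≤ (specNorm A * rowSumNorm (Ab - Abh) + specNorm (A - Ah) * rowSumNorm Abh) * l21 X
        + specNorm Ah * rowSumNorm Abh * l21 (X - Xh) := by
  have hsplit : A * X * Ab - Ah * Xh * Abh
      = A * X * (Ab - Abh) + ((A - Ah) * X * Abh + Ah * (X - Xh) * Abh) := by
    simp only [Matrix.mul_sub, Matrix.sub_mul]
    abel
  calc l21 (A * X * Ab - Ah * Xh * Abh)
      ≤ l21 (A * X * (Ab - Abh)) + (l21 ((A - Ah) * X * Abh) + l21 (Ah * (X - Xh) * Abh)) := by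
        rw [hsplit]
        exact (l21_add_le _ _).trans (add_le_add_right (l21_add_le _ _) _)
    _ ≤ specNorm A * rowSumNorm (Ab - Abh) * l21 X
          + (specNorm (A - Ah) * rowSumNorm Abh * l21 X
            + specNorm Ah * rowSumNorm Abh * l21 (X - Xh)) :=
        add_le_add (l21_mul_mul_le _ _ _)
          (add_le_add (l21_mul_mul_le _ _ _) (l21_mul_mul_le _ _ _))
    _ = (specNorm A * rowSumNorm (Ab - Abh) + specNorm (A - Ah) * rowSumNorm Abh) * l21 X
          + specNorm Ah * rowSumNorm Abh * l21 (X - Xh) := by ring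
end
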